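/- arXiv:1901.03719 — 5 statements merged into one kernel-verified Lean document; each statement's English description precedes it below -/
import Mathlib

section
/- Fix constants k ≥ 1 and s ≥ k. For k ≤ t ≤ 2k−2, define a_t = ∑_{i=t−k+1}^{k−1} C(s−1,i)·C(s−1,t−i) and b_t = C(2s−2,t). Then (2k−1−t)/(t+1) ≤ a_t/b_t ≤ 1. -/
/-!
Write `f i = C(n, i) C(n, t - i)` with `n = s - 1`, so that `b_t = ∑_{i ≤ t} f i` by Vandermonde.
Log-concavity of `i ↦ C(n, i)` makes `f` increase up to `t / 2`, and `f` is symmetric under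
`i ↦ t - i`, so `f i` only grows as `min i (t - i)` does. The window `t - k + 1 ≤ i ≤ k - 1` is
centred at `t / 2`: its `2k - 1 - t` terms are the largest of the `t + 1` terms of `b_t`, so their
average is at least the average of all of them.
-/

open Finset

namespace Finset

theorem card_mul_sum_le_card_mul_sum_of_le_of_le {ι R : Type*} [DecidableEq ι] [CommSemiring R]
    [PartialOrder R] [IsOrderedRing R] {s t : Finset ι} {f : ι → R} {c : R} (hst : s ⊆ t)
    (hs : ∀ i ∈ s, c ≤ f i) (ht : ∀ i ∈ t \ s, f i ≤ c) :
    (#s : R) * ∑ i ∈ t, f i ≤ #t * ∑ i ∈ s, f i := by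
  have hout : ∑ i ∈ t \ s, f i ≤ #(t \ s) * c := by simpa using sum_le_card_nsmul _ _ _ ht
  have hin : #s * c ≤ ∑ i ∈ s, f i := by simpa using card_nsmul_le_sum _ _ _ hs
  calc (#s : R) * ∑ i ∈ t, f i = #s * ∑ i ∈ t \ s, f i + #s * ∑ i ∈ s, f i := by
        rw [← sum_sdiff hst, mul_add]
    _ ≤ #s * (#(t \ s) * c) + #s * ∑ i ∈ s, f i := by gcongr
    _ = #(t \ s) * (#s * c) + #s * ∑ i ∈ s, f i := by ring
    _ ≤ #(t \ s) * ∑ i ∈ s, f i + #s * ∑ i ∈ s, f i := by gcongr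
    _ = #t * ∑ i ∈ s, f i := by rw [← add_mul, ← Nat.cast_add, card_sdiff_add_card_eq_card hst]

end Finset

namespace Nat

theorem choose_mul_choose_succ_le_choose_succ_mul_choose (n : ℕ) {a b : ℕ} (hab : a ≤ b) :
    n.choose a * n.choose (b + 1) ≤ n.choose (a + 1) * n.choose b := by
  refine Nat.le_of_mul_le_mul_right (c := (a + 1) * (b + 1)) ?_ (by positivity)
  have hfactors : (n - b) * (a + 1) ≤ (n - a) * (b + 1) := Nat.mul_le_mul (by omega) (by omega)
  calc n.choose a * n.choose (b + 1) * ((a + 1) * (b + 1))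
      = n.choose a * (a + 1) * (n.choose (b + 1) * (b + 1)) := by ring
    _ = n.choose a * n.choose b * ((n - b) * (a + 1)) := by rw [n.choose_succ_right_eq b]; ring
    _ ≤ n.choose a * n.choose b * ((n - a) * (b + 1)) := by gcongr
    _ = n.choose a * (n - a) * n.choose b * (b + 1) := by ring
    _ = n.choose (a + 1) * n.choose b * ((a + 1) * (b + 1)) := by
        rw [← n.choose_succ_right_eq a]; ring

theorem choose_mul_choose_sub_le_of_le (n : ℕ) {t i j : ℕ} (hij : i ≤ j) (hjt : 2 * j ≤ t) :
    n.choose i * n.choose (t - i) ≤ n.choose j * n.choose (t - j) := by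
  induction j, hij using Nat.le_induction with
  | base => exact le_rfl
  | succ j _ ih =>
    have step := n.choose_mul_choose_succ_le_choose_succ_mul_choose (show j ≤ t - (j + 1) by omega)
    rw [show t - (j + 1) + 1 = t - j by omega] at step
    exact (ih (by omega)).trans step

theorem choose_mul_choose_sub_eq_min (n : ℕ) {t i : ℕ} (hi : i ≤ t) :
    n.choose i * n.choose (t - i) =
      n.choose (min i (t - i)) * n.choose (t - min i (t - i)) := by
  rcases le_total i (t - i) with h | h
  · rw [min_eq_left h]
  · rw [min_eq_right h, Nat.sub_sub_self hi, mul_comm]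

theorem choose_mul_choose_sub_le_of_min_le (n : ℕ) {t i j : ℕ} (hi : i ≤ t) (hj : j ≤ t)
    (hij : min i (t - i) ≤ min j (t - j)) :
    n.choose i * n.choose (t - i) ≤ n.choose j * n.choose (t - j) := by
  rw [n.choose_mul_choose_sub_eq_min hi, n.choose_mul_choose_sub_eq_min hj]
  exact n.choose_mul_choose_sub_le_of_le hij (by omega)

end Nat

theorem a_t_over_b_t_bounds_general (k s t : ℕ) (hks : k ≤ s)
    (htk : k ≤ t) (ht : t ≤ 2 * k - 2) :
    ((2 * k - 1 - t : ℕ) : ℝ) / ((t : ℝ) + 1) ≤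
      (∑ i ∈ Finset.Icc (t - k + 1) (k - 1),
        ((s - 1).choose i : ℝ) * ((s - 1).choose (t - i) : ℝ)) / ((2 * s - 2).choose t : ℝ) ∧
    (∑ i ∈ Finset.Icc (t - k + 1) (k - 1),
        ((s - 1).choose i : ℝ) * ((s - 1).choose (t - i) : ℝ)) / ((2 * s - 2).choose t : ℝ)
      ≤ 1 := by
  have hwindow : Icc (t - k + 1) (k - 1) ⊆ range (t + 1) := by
    intro i; simp only [mem_Icc, mem_range]; omega
  have hcard : #(Icc (t - k + 1) (k - 1)) = 2 * k - 1 - t := by rw [Nat.card_Icc]; omega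
  have hb : ((2 * s - 2).choose t : ℝ) =
      ∑ i ∈ range (t + 1), ((s - 1).choose i : ℝ) * ((s - 1).choose (t - i) : ℝ) := by
    rw [show 2 * s - 2 = (s - 1) + (s - 1) by omega, Nat.add_choose_eq,
      Nat.sum_antidiagonal_eq_sum_range_succ_mk]
    push_cast; rfl
  have hb_pos : (0 : ℝ) < (2 * s - 2).choose t := by exact_mod_cast Nat.choose_pos (by omega)
  constructor
  · have haverage := card_mul_sum_le_card_mul_sum_of_le_of_le hwindow
      (f := fun i => ((s - 1).choose i : ℝ) * ((s - 1).choose (t - i) : ℝ))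
      (c := ((s - 1).choose (k - 1) : ℝ) * ((s - 1).choose (t - (k - 1)) : ℝ))
      (fun j hj => by
        simp only [mem_Icc] at hj
        exact_mod_cast (s - 1).choose_mul_choose_sub_le_of_min_le (by omega) (by omega) (by omega))
      (fun i hi => by
        simp only [mem_sdiff, mem_range, mem_Icc] at hi
        exact_mod_cast (s - 1).choose_mul_choose_sub_le_of_min_le (by omega) (by omega) (by omega))
    rw [hcard, card_range, ← hb] at haverage
    rw [div_le_div_iff₀ (by positivity) hb_pos]
    push_cast at haverage
    linarith
  · rw [div_le_one hb_pos, hb]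
    exact sum_le_sum_of_subset_of_nonneg hwindow fun _ _ _ => by positivity

/-- for `k ≤ t ≤ 2k−2`, with `a_t = ∑_{i=t−k+1}^{k−1} C(s−1,i)C(s−1,t−i)`
and `b_t = C(2s−2,t)`, one has `(2k−1−t)/(t+1) ≤ a_t/b_t ≤ 1`. -/
theorem a_t_over_b_t_bounds (k s t : ℕ) (hk : 1 ≤ k) (hks : k ≤ s)
    (htk : k ≤ t) (ht : t ≤ 2 * k - 2) :
    ((2 * k - 1 - t : ℕ) : ℝ) / ((t : ℝ) + 1) ≤
      (∑ i ∈ Finset.Icc (t - k + 1) (k - 1),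
        ((s - 1).choose i : ℝ) * ((s - 1).choose (t - i) : ℝ)) / ((2 * s - 2).choose t : ℝ) ∧
    (∑ i ∈ Finset.Icc (t - k + 1) (k - 1),
        ((s - 1).choose i : ℝ) * ((s - 1).choose (t - i) : ℝ)) / ((2 * s - 2).choose t : ℝ)
      ≤ 1 :=
  a_t_over_b_t_bounds_general k s t hks htk ht
end

section
/- With the setup of i.i.d. samples X₁,…,X_{2s−1} and P₁ the mass of the ball around x of radius ‖x−X₁‖: for every 0 ≤ r ≤ 2s−2, E[(1−P₁)^{2s−2−r} P₁^r] = 1 / (C(2s−2,r)·(2s−1)). -/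
/-!
`P₁` is `F (dist x X₁)`, where `F` is the distribution function of the law `ν` of `dist x X₁`.
Without ties `ν` has no atoms, so `F` is continuous and `F (dist x X₁)` is uniform on `[0, 1]`
(probability integral transform). The moment is therefore the beta integral
`∫₀¹ p ^ r (1 - p) ^ a dp = r! a! / (r + a + 1)!`.
-/

open MeasureTheory ProbabilityTheory Set Filter Topology
open scoped Nat

lemma continuous_cdf (ν : Measure ℝ) [IsProbabilityMeasure ν] [NullSingletonClass ν] :
    Continuous (cdf ν) := by
  refine continuous_iff_continuousAt.2 fun t ↦ continuousAt_iff_continuous_left'_right'.2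
    ⟨?_, continuousWithinAt_Ioi_iff_Ici.2 ((cdf ν).right_continuous t)⟩
  have h := (cdf ν).measure_singleton t
  rw [measure_cdf, measure_singleton, eq_comm, ENNReal.ofReal_eq_zero, sub_nonpos] at h
  exact (monotone_cdf ν).continuousWithinAt_Iio_iff_leftLim_eq.2 <|
    ((monotone_cdf ν).leftLim_le le_rfl).antisymm h

lemma Monotone.exists_apply_eq_and_preimage_Iic_eq {f : ℝ → ℝ} (hf : Monotone f)
    (hc : Continuous f) {u : ℝ} (hne : (f ⁻¹' Iic u).Nonempty) (hbdd : BddAbove (f ⁻¹' Iic u)) :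
    ∃ σ, f σ = u ∧ f ⁻¹' Iic u = Iic σ := by
  set σ := sSup (f ⁻¹' Iic u)
  have hσ : f σ ≤ u := (isClosed_Iic.preimage hc).csSup_mem hne hbdd
  refine ⟨σ, hσ.antisymm ?_, Subset.antisymm (fun t ht ↦ le_csSup hbdd ht)
    fun t ht ↦ (hf ht).trans hσ⟩
  by_contra! hlt
  obtain ⟨t, hσt, ht⟩ := ((hc.tendsto σ).eventually (gt_mem_nhds hlt)).exists_gt
  exact (le_csSup hbdd (show f t ≤ u from ht.le)).not_gt hσt

lemma measure_cdf_preimage_Iic (ν : Measure ℝ) [IsProbabilityMeasure ν] [NullSingletonClass ν]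
    {u : ℝ} (hu : u < 1) : ν (cdf ν ⁻¹' Iic u) = ENNReal.ofReal u := by
  rcases (cdf ν ⁻¹' Iic u).eq_empty_or_nonempty with hempty | hne
  · have hu0 : u ≤ 0 := ge_of_tendsto' (tendsto_cdf_atBot ν) fun t ↦
      le_of_lt <| not_le.1 fun ht ↦ hempty.subset ht
    rw [hempty, measure_empty, ENNReal.ofReal_of_nonpos hu0]
  · obtain ⟨t₀, ht₀⟩ := ((tendsto_cdf_atTop ν).eventually_const_lt hu).exists
    have hbdd : BddAbove (cdf ν ⁻¹' Iic u) := ⟨t₀, fun t ht ↦ le_of_not_gt fun h ↦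
      (((monotone_cdf ν) h.le).trans ht).not_gt ht₀⟩
    obtain ⟨σ, hσ, hpre⟩ := (monotone_cdf ν).exists_apply_eq_and_preimage_Iic_eq
      (continuous_cdf ν) hne hbdd
    rw [hpre, ← ofReal_cdf, hσ]

lemma map_cdf_eq_volume_restrict_Icc (ν : Measure ℝ) [IsProbabilityMeasure ν]
    [NullSingletonClass ν] : ν.map (cdf ν) = volume.restrict (Icc 0 1) := by
  have hm : Measurable (cdf ν) := (monotone_cdf ν).measurable
  refine Measure.ext_of_Iic _ _ fun u ↦ ?_
  rw [Measure.map_apply hm measurableSet_Iic, Measure.restrict_apply measurableSet_Iic]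
  rcases lt_or_ge u 1 with hu | hu
  · have hIcc : Iic u ∩ Icc 0 1 = Icc 0 u := by
      ext t
      simp only [mem_inter_iff, mem_Iic, mem_Icc]
      exact ⟨fun h ↦ ⟨h.2.1, h.1⟩, fun h ↦ ⟨h.2, h.1, h.2.trans hu.le⟩⟩
    rw [measure_cdf_preimage_Iic ν hu, hIcc, Real.volume_Icc, sub_zero]
  · rw [preimage_eq_univ_iff.2 fun _ ⟨t, ht⟩ ↦ ht ▸ (cdf_le_one ν t).trans hu, measure_univ,
      inter_eq_right.2 fun t ht ↦ ht.2.trans hu, Real.volume_Icc, sub_zero, ENNReal.ofReal_one]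

lemma integral_comp_cdf (ν : Measure ℝ) [IsProbabilityMeasure ν] [NullSingletonClass ν]
    {g : ℝ → ℝ} (hg : AEStronglyMeasurable g (volume.restrict (Icc 0 1))) :
    ∫ t, g (cdf ν t) ∂ν = ∫ p in (0:ℝ)..1, g p := by
  rw [intervalIntegral.integral_of_le zero_le_one, ← integral_Icc_eq_integral_Ioc,
    ← map_cdf_eq_volume_restrict_Icc ν, integral_map (monotone_cdf ν).measurable.aemeasurable]
  rwa [map_cdf_eq_volume_restrict_Icc ν]

lemma cdf_map_dist {X : Type*} [PseudoMetricSpace X] [MeasurableSpace X] [OpensMeasurableSpace X]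
    (μ : Measure X) [IsProbabilityMeasure μ] (x : X) (t : ℝ) :
    cdf (μ.map (dist x)) t = μ.real (Metric.closedBall x t) := by
  have hd : Measurable (dist x) := (continuous_const.dist continuous_id).measurable
  have : IsProbabilityMeasure (μ.map (dist x)) := Measure.isProbabilityMeasure_map hd.aemeasurable
  rw [cdf_eq_real, map_measureReal_apply hd measurableSet_Iic]
  congr 1
  ext y
  rw [mem_preimage, mem_Iic, Metric.mem_closedBall, dist_comm]

lemma integral_comp_measureReal_closedBall_dist {X : Type*} [PseudoMetricSpace X]
    [MeasurableSpace X] [OpensMeasurableSpace X] (μ : Measure X) [IsProbabilityMeasure μ] (x : X)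
    (hties : ∀ c : ℝ, μ {y | dist y x = c} = 0) {g : ℝ → ℝ} (hg : Measurable g) :
    ∫ y, g (μ.real (Metric.closedBall x (dist x y))) ∂μ = ∫ p in (0:ℝ)..1, g p := by
  have hd : Measurable (dist x) := (continuous_const.dist continuous_id).measurable
  have : IsProbabilityMeasure (μ.map (dist x)) := Measure.isProbabilityMeasure_map hd.aemeasurable
  have : NullSingletonClass (μ.map (dist x)) := ⟨fun c ↦ by
    rw [Measure.map_apply hd (measurableSet_singleton c)]
    simpa only [preimage, mem_singleton_iff, dist_comm x] using hties c⟩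
  simp_rw [← cdf_map_dist]
  rw [← integral_comp_cdf (μ.map (dist x)) hg.aestronglyMeasurable]
  exact (integral_map hd.aemeasurable (hg.comp (monotone_cdf _).measurable).aestronglyMeasurable).symm

lemma integral_pow_mul_one_sub_pow (r a : ℕ) :
    ∫ p in (0:ℝ)..1, p ^ r * (1 - p) ^ a = (r ! * a ! : ℝ) / (r + a + 1)! := by
  have h := Complex.betaIntegral_eq_Gamma_mul_div (r + 1) (a + 1)
    (by simp only [Complex.add_re, Complex.natCast_re, Complex.one_re]; positivity)
    (by simp only [Complex.add_re, Complex.natCast_re, Complex.one_re]; positivity)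
  rw [Complex.betaIntegral, show (r + 1 + (a + 1) : ℂ) = ↑(r + a + 1) + 1 by push_cast; ring,
    Complex.Gamma_nat_eq_factorial, Complex.Gamma_nat_eq_factorial,
    Complex.Gamma_nat_eq_factorial] at h
  simp only [add_sub_cancel_right, Complex.cpow_natCast] at h
  rw [← Complex.ofReal_inj, ← intervalIntegral.integral_ofReal]
  push_cast at h ⊢
  exact h

lemma integral_pow_mul_one_sub_pow_eq_one_div (r a : ℕ) :
    ∫ p in (0:ℝ)..1, p ^ r * (1 - p) ^ a = 1 / (((r + a).choose r : ℝ) * (r + a + 1)) := by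
  have h : ((r + a).choose r * (r + a + 1) * (r ! * a !) : ℝ) = (r + a + 1)! := by
    rw [Nat.factorial_succ, ← Nat.add_choose_mul_factorial_mul_factorial, Nat.choose_symm_add]
    push_cast
    ring
  rw [integral_pow_mul_one_sub_pow, ← h, div_mul_cancel_right₀ (by positivity), one_div]

/-- with `P₁ = μ(closedBall x ‖x−X₁‖)` for `X₁ ∼ μ` and no ties,
for every `0 ≤ r ≤ 2s−2`, `E[(1−P₁)^{2s−2−r} P₁^r] = 1/(C(2s−2,r)·(2s−1))`. -/
theorem ball_mass_moment {D s r : ℕ} (hs : 1 ≤ s) (hr : r ≤ 2 * s - 2)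
    (μ : Measure (EuclideanSpace ℝ (Fin D))) [IsProbabilityMeasure μ]
    (x : EuclideanSpace ℝ (Fin D))
    (hties : ∀ c : ℝ, μ {y | dist y x = c} = 0) :
    ∫ y, (1 - (μ (Metric.closedBall x (dist x y))).toReal) ^ (2 * s - 2 - r)
          * ((μ (Metric.closedBall x (dist x y))).toReal) ^ r ∂μ
      = 1 / (((2 * s - 2).choose r : ℝ) * (2 * (s : ℝ) - 1)) := by
  obtain ⟨a, ha⟩ := Nat.exists_eq_add_of_le hr
  have hn : 2 * (s : ℝ) - 1 = r + a + 1 := by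
    have := congrArg (Nat.cast : ℕ → ℝ) ha
    push_cast [Nat.cast_sub (by omega : 2 ≤ 2 * s)] at this
    linarith
  simp_rw [← measureReal_def]
  rw [integral_comp_measureReal_closedBall_dist μ x hties
    (g := fun p ↦ (1 - p) ^ (2 * s - 2 - r) * p ^ r) (by fun_prop), hn, ha,
    Nat.add_sub_cancel_left, ← integral_pow_mul_one_sub_pow_eq_one_div]
  simp_rw [mul_comm]
end

section
/- Product measure homogeneity: if μ₁ is (C₁,d₁)-homogeneous on B(x₁,r₁) ⊂ ℝ^{D₁} and μ₂ is (C₂,d₂)-homogeneous on B(x₂,r₂) ⊂ ℝ^{D₂}, then the product measure μ = μ₁ × μ₂ is (C, d₁+d₂)-homogeneous on B((x₁,x₂), r) with r = min(r₁,r₂) and C = C₁C₂ r^{−(d₁+d₂)} 2^{(d₁+d₂)/2} r₁^{d₁} r₂^{d₂}. -/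
open MeasureTheory

/-- `μ` is `(C,d)`-homogeneous on `B(x,r)`:
`μ(B(x,r)) ≤ C θ^{−d} μ(B(x,θr))` for all `θ ∈ (0,1)`. -/
def IsHomogeneousOn {α : Type*} [PseudoMetricSpace α] [MeasurableSpace α]
    (μ : Measure α) (C d : ℝ) (x : α) (r : ℝ) : Prop :=
  ∀ θ : ℝ, θ ∈ Set.Ioo (0 : ℝ) 1 →
    (μ (Metric.ball x r)).toReal ≤ C * θ ^ (-d) * (μ (Metric.ball x (θ * r))).toReal

noncomputable instance {D₁ D₂ : ℕ} :
    MeasurableSpace (WithLp 2 (EuclideanSpace ℝ (Fin D₁) × EuclideanSpace ℝ (Fin D₂))) :=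
  MeasurableSpace.comap (WithLp.equiv 2 (EuclideanSpace ℝ (Fin D₁) × EuclideanSpace ℝ (Fin D₂)))
    inferInstance

/-! In the `L²` product metric the ball of radius `r = min r₁ r₂` about `(x₁, x₂)` lies in the
box `B(x₁, r₁) × B(x₂, r₂)`, while the box `B(x₁, s) × B(x₂, s)` with `s = θr/√2` lies in the ball
of radius `θr`. Since the product measure of a box factors, homogeneity of each factor at the
ratio `s / rᵢ` bounds the big box by `C₁ (s/r₁)^{-d₁} C₂ (s/r₂)^{-d₂}` times the small one, and
expanding `s` turns this factor into the stated constant times `θ^{-(d₁+d₂)}`. -/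

open Metric

namespace WithLp

variable {α β : Type*} [PseudoMetricSpace α] [PseudoMetricSpace β]

lemma preimage_toLp_ball_subset_prod (p : ENNReal) [Fact (1 ≤ p)] (x : α × β) (r : ℝ) :
    toLp p ⁻¹' ball (toLp p x) r ⊆ ball x.1 r ×ˢ ball x.2 r := fun z hz =>
  ⟨(dist_fst_le (toLp p z) (toLp p x)).trans_lt hz,
    (dist_snd_le (toLp p z) (toLp p x)).trans_lt hz⟩

lemma prod_ball_subset_preimage_toLp_ball (x : α × β) (s : ℝ) :
    ball x.1 s ×ˢ ball x.2 s ⊆ toLp 2 ⁻¹' ball (toLp 2 x) (√2 * s) := by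
  rintro z ⟨hz₁, hz₂⟩
  have hs : 0 < s := dist_nonneg.trans_lt hz₁
  rw [mem_ball] at hz₁ hz₂
  rw [Set.mem_preimage, mem_ball, prod_dist_eq_add (by norm_num), toLp_fst, toLp_fst,
    toLp_snd, toLp_snd, ENNReal.toReal_ofNat, Real.rpow_two, Real.rpow_two, ← Real.sqrt_eq_rpow,
    ← Real.sqrt_sq hs.le, ← Real.sqrt_mul two_pos.le]
  have h₁ := pow_lt_pow_left₀ hz₁ dist_nonneg two_ne_zero
  have h₂ := pow_lt_pow_left₀ hz₂ dist_nonneg two_ne_zero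
  exact Real.sqrt_lt_sqrt (by positivity) (by linarith)

end WithLp

lemma Real.div_rpow_neg {s r : ℝ} (hs : 0 < s) (hr : 0 < r) (d : ℝ) :
    (s / r) ^ (-d) = s ^ (-d) * r ^ d := by
  rw [Real.div_rpow hs.le hr.le, Real.rpow_neg hr.le, div_inv_eq_mul]

lemma Real.mul_div_sqrt_two_div_rpow_neg {θ r ρ : ℝ} (hθ : 0 < θ) (hr : 0 < r) (hρ : 0 < ρ)
    (d : ℝ) : (θ * r / √2 / ρ) ^ (-d) = θ ^ (-d) * r ^ (-d) * 2 ^ (d / 2) * ρ ^ d := by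
  rw [Real.div_rpow_neg (by positivity) hρ, Real.div_rpow_neg (by positivity) (by positivity),
    Real.mul_rpow hθ.le hr.le, Real.sqrt_eq_rpow, ← Real.rpow_mul two_pos.le, one_div_mul_eq_div]

section Homogeneity

variable {α β : Type*} [PseudoMetricSpace α] [MeasurableSpace α]
  [PseudoMetricSpace β] [MeasurableSpace β]

lemma IsHomogeneousOn.toReal_measure_ball_le {μ : Measure α} {C d r : ℝ} {x : α}
    (h : IsHomogeneousOn μ C d x r) (hr : 0 < r) {s : ℝ} (hs : 0 < s) (hsr : s < r) :
    (μ (ball x r)).toReal ≤ C * (s / r) ^ (-d) * (μ (ball x s)).toReal := by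
  simpa only [div_mul_cancel₀ s hr.ne'] using h (s / r) ⟨div_pos hs hr, (div_lt_one hr).2 hsr⟩

lemma IsHomogeneousOn.toReal_prod_ball_le {μ₁ : Measure α} {μ₂ : Measure β}
    [SFinite μ₂] {C₁ C₂ d₁ d₂ r₁ r₂ : ℝ} {x₁ : α} {x₂ : β}
    (h₁ : IsHomogeneousOn μ₁ C₁ d₁ x₁ r₁) (h₂ : IsHomogeneousOn μ₂ C₂ d₂ x₂ r₂)
    (hr₁ : 0 < r₁) (hr₂ : 0 < r₂) {s : ℝ} (hs : 0 < s) (hs₁ : s < r₁) (hs₂ : s < r₂) :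
    ((μ₁.prod μ₂) (ball x₁ r₁ ×ˢ ball x₂ r₂)).toReal ≤
      C₁ * (s / r₁) ^ (-d₁) * (C₂ * (s / r₂) ^ (-d₂)) *
        ((μ₁.prod μ₂) (ball x₁ s ×ˢ ball x₂ s)).toReal := by
  have hb₁ := h₁.toReal_measure_ball_le hr₁ hs hs₁
  have hb₂ := h₂.toReal_measure_ball_le hr₂ hs hs₂
  rw [Measure.prod_prod, Measure.prod_prod, ENNReal.toReal_mul, ENNReal.toReal_mul]
  calc _ ≤ C₁ * (s / r₁) ^ (-d₁) * (μ₁ (ball x₁ s)).toReal *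
          (C₂ * (s / r₂) ^ (-d₂) * (μ₂ (ball x₂ s)).toReal) :=
        mul_le_mul hb₁ hb₂ ENNReal.toReal_nonneg (ENNReal.toReal_nonneg.trans hb₁)
    _ = _ := by ring

end Homogeneity

theorem product_measure_homogeneous_general {D₁ D₂ : ℕ}
    (μ₁ : Measure (EuclideanSpace ℝ (Fin D₁))) [IsProbabilityMeasure μ₁]
    (μ₂ : Measure (EuclideanSpace ℝ (Fin D₂))) [IsProbabilityMeasure μ₂]
    (x₁ : EuclideanSpace ℝ (Fin D₁)) (x₂ : EuclideanSpace ℝ (Fin D₂))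
    (C₁ C₂ d₁ d₂ r₁ r₂ : ℝ) (hC₁ : 0 < C₁) (hC₂ : 0 < C₂)
    (hr₁ : 0 < r₁) (hr₂ : 0 < r₂)
    (h₁ : IsHomogeneousOn μ₁ C₁ d₁ x₁ r₁)
    (h₂ : IsHomogeneousOn μ₂ C₂ d₂ x₂ r₂) :
    IsHomogeneousOn
      (Measure.map (fun z : EuclideanSpace ℝ (Fin D₁) × EuclideanSpace ℝ (Fin D₂) =>
          ((WithLp.equiv 2 _).symm z)) (μ₁.prod μ₂))
      (C₁ * C₂ * (min r₁ r₂) ^ (-(d₁ + d₂)) * (2 : ℝ) ^ ((d₁ + d₂) / 2)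
        * r₁ ^ d₁ * r₂ ^ d₂)
      (d₁ + d₂)
      ((WithLp.equiv 2 _).symm (x₁, x₂))
      (min r₁ r₂) := by
  rintro θ ⟨hθ₀, hθ₁⟩
  set r := min r₁ r₂
  have hr : 0 < r := lt_min hr₁ hr₂
  set s := θ * r / √2
  have hs : 0 < s := by positivity
  have hsr : s < r := (div_le_self (by positivity) Real.one_lt_sqrt_two.le).trans_lt
    (mul_lt_of_lt_one_left hr hθ₁)
  have hmap (t : ℝ) : (μ₁.prod μ₂).map (fun z => (WithLp.equiv 2 _).symm z)
        (ball ((WithLp.equiv 2 _).symm (x₁, x₂)) t)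
      = (μ₁.prod μ₂) (WithLp.toLp 2 ⁻¹' ball (WithLp.toLp 2 (x₁, x₂)) t) :=
    (MeasurableEquiv.toLp 2 _).map_apply _
  calc _ = ((μ₁.prod μ₂) (WithLp.toLp 2 ⁻¹' ball (WithLp.toLp 2 (x₁, x₂)) r)).toReal := by
        rw [← hmap]
    _ ≤ ((μ₁.prod μ₂) (ball x₁ r₁ ×ˢ ball x₂ r₂)).toReal :=
        ENNReal.toReal_mono (measure_ne_top _ _) <| measure_mono <|
          (WithLp.preimage_toLp_ball_subset_prod 2 _ r).trans <|
            Set.prod_mono (ball_subset_ball (min_le_left _ _)) (ball_subset_ball (min_le_right _ _))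
    _ ≤ C₁ * (s / r₁) ^ (-d₁) * (C₂ * (s / r₂) ^ (-d₂)) *
          ((μ₁.prod μ₂) (ball x₁ s ×ˢ ball x₂ s)).toReal :=
        h₁.toReal_prod_ball_le h₂ hr₁ hr₂ hs (hsr.trans_le (min_le_left _ _))
          (hsr.trans_le (min_le_right _ _))
    _ ≤ C₁ * (s / r₁) ^ (-d₁) * (C₂ * (s / r₂) ^ (-d₂)) *
          ((μ₁.prod μ₂) (WithLp.toLp 2 ⁻¹' ball (WithLp.toLp 2 (x₁, x₂)) (√2 * s))).toReal := by
        gcongr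
        exacts [measure_ne_top _ _, WithLp.prod_ball_subset_preimage_toLp_ball (x₁, x₂) s]
    _ = _ := by
        rw [hmap, mul_div_cancel₀ _ (by positivity), Real.mul_div_sqrt_two_div_rpow_neg hθ₀ hr hr₁,
          Real.mul_div_sqrt_two_div_rpow_neg hθ₀ hr hr₂, neg_add, Real.rpow_add hθ₀,
          Real.rpow_add hr, add_div, Real.rpow_add two_pos]
        ring

/-- if `μ₁` is `(C₁,d₁)`-homogeneous on `B(x₁,r₁)` and `μ₂` is
`(C₂,d₂)`-homogeneous on `B(x₂,r₂)`, then the product measure `μ₁ × μ₂` (on the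
product space equipped with the Euclidean (L²) product metric) is
`(C, d₁+d₂)`-homogeneous on `B((x₁,x₂), r)` with `r = min r₁ r₂` and
`C = C₁ C₂ r^{−(d₁+d₂)} 2^{(d₁+d₂)/2} r₁^{d₁} r₂^{d₂}`. -/
theorem product_measure_homogeneous {D₁ D₂ : ℕ}
    (μ₁ : Measure (EuclideanSpace ℝ (Fin D₁))) [IsProbabilityMeasure μ₁]
    (μ₂ : Measure (EuclideanSpace ℝ (Fin D₂))) [IsProbabilityMeasure μ₂]
    (x₁ : EuclideanSpace ℝ (Fin D₁)) (x₂ : EuclideanSpace ℝ (Fin D₂))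
    (C₁ C₂ d₁ d₂ r₁ r₂ : ℝ) (hC₁ : 0 < C₁) (hC₂ : 0 < C₂)
    (hd₁ : 0 < d₁) (hd₂ : 0 < d₂) (hr₁ : 0 < r₁) (hr₂ : 0 < r₂)
    (h₁ : IsHomogeneousOn μ₁ C₁ d₁ x₁ r₁)
    (h₂ : IsHomogeneousOn μ₂ C₂ d₂ x₂ r₂) :
    IsHomogeneousOn
      (Measure.map (fun z : EuclideanSpace ℝ (Fin D₁) × EuclideanSpace ℝ (Fin D₂) =>
          ((WithLp.equiv 2 _).symm z)) (μ₁.prod μ₂))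
      (C₁ * C₂ * (min r₁ r₂) ^ (-(d₁ + d₂)) * (2 : ℝ) ^ ((d₁ + d₂) / 2)
        * r₁ ^ d₁ * r₂ ^ d₂)
      (d₁ + d₂)
      ((WithLp.equiv 2 _).symm (x₁, x₂))
      (min r₁ r₂) :=
  product_measure_homogeneous_general μ₁ μ₂ x₁ x₂ C₁ C₂ d₁ d₂ r₁ r₂ hC₁ hC₂ hr₁ hr₂ h₁ h₂
end

section
/- k-NN high-probability shrinkage: suppose μ is (C,d)-homogeneous on B(x,r), i.e., μ(B(x,r)) ≤ C θ^{−d} μ(B(x,θr)) for all θ ∈ (0,1). Let X₁,…,X_s be i.i.d. ∼ μ and X_{(k)} the k-th nearest sample to x. For any δ with 2exp(−μ(B(x,r))s/(8C)) ≤ δ ≤ (1/2)exp(−k/2), with probability at least 1−δ, ‖x − X_{(k)}‖₂ ≤ r·(8C log(2/δ)/(μ(B(x,r)) s))^{1/d}. -/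
/-!
Set `L = log (2/δ)`. Homogeneity, applied at `θ = (8 C L / (μ(B(x,r)) s))^{1/d}` (at most `1` by
the lower bound on `δ`), gives the ball `B(x, θ r)` mass `p ≥ 8 L / s`. The number of samples in
that ball is a sum of independent Bernoulli variables, so the Chernoff bound at `t = -log 2`
bounds the probability that at most `k` of them fall in it by `2^k e^{-sp/2} ≤ e^{k - 4L}`, and
`k ≤ 2L` by the upper bound on `δ`, so this is at most `e^{-2L} = (δ/2)^2 ≤ δ`.
-/

open MeasureTheory ProbabilityTheory Metric Real
open scoped Finset

section Chernoff

variable {Ω : Type*} [MeasurableSpace Ω] {P : Measure Ω} [IsProbabilityMeasure P]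

lemma one_sub_measureReal_compl_le (s : Set Ω) : 1 - P.real sᶜ ≤ P.real s := by
  linarith [measureReal_union_le (μ := P) s sᶜ, Set.union_compl_self s ▸ probReal_univ (μ := P)]

lemma mgf_indicator_one {E : Set Ω} (hE : MeasurableSet E) (t : ℝ) :
    mgf (E.indicator 1) P t = 1 + P.real E * (exp t - 1) := by
  have h : (fun ω => exp (t * E.indicator 1 ω)) =
      fun ω => E.indicator (fun _ => exp t - 1) ω + 1 := by
    ext ω
    by_cases hω : ω ∈ E <;> simp [hω]
  rw [mgf, h, integral_add ((integrable_const _).indicator hE) (integrable_const 1),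
    integral_indicator_const _ hE]
  simp only [smul_eq_mul, integral_const, probReal_univ]
  ring

open Classical in
theorem measureReal_card_filter_le_le {ι α : Type*} [Fintype ι] [MeasurableSpace α]
    {X : ι → Ω → α} {A : Set α} (hX : ∀ i, Measurable (X i)) (hindep : iIndepFun X P)
    (hA : MeasurableSet A) {p : ℝ} (hp : ∀ i, p ≤ P.real (X i ⁻¹' A)) (k : ℕ) :
    P.real {ω | #{i | X i ω ∈ A} ≤ k} ≤ 2 ^ k * exp (-(Fintype.card ι * p / 2)) := by
  set Y : ι → Ω → ℝ := fun i => A.indicator 1 ∘ X i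
  have hY_meas : ∀ i, Measurable (Y i) := fun i => (measurable_one.indicator hA).comp (hX i)
  have hY_indep : iIndepFun Y P := hindep.comp _ fun _ => measurable_one.indicator hA
  have ht : -log 2 ≤ 0 := neg_nonpos.mpr (log_nonneg one_le_two)
  have hY_int : ∀ i, Integrable (fun ω => exp (-log 2 * Y i ω)) P := fun i =>
    .of_bound ((hY_meas i).const_mul _).exp.aestronglyMeasurable 1 <| ae_of_all _ fun ω => by
      rw [norm_of_nonneg (exp_pos _).le, exp_le_one_iff]
      exact mul_nonpos_of_nonpos_of_nonneg ht (Set.indicator_nonneg (fun _ _ => zero_le_one) _)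
  have hY_mgf : ∀ i, mgf (Y i) P (-log 2) = 1 - P.real (X i ⁻¹' A) / 2 := by
    intro i
    rw [show Y i = (X i ⁻¹' A).indicator 1 from funext fun ω => (Set.indicator_comp_right _).symm,
      mgf_indicator_one (hX i hA), exp_neg, exp_log two_pos]
    ring
  have hcount : {ω | #{i | X i ω ∈ A} ≤ k} = {ω | (∑ i, Y i) ω ≤ k} := by
    ext ω
    simp [Y, Finset.sum_apply, Set.indicator_apply, Finset.sum_boole]
  have hchernoff := measure_le_le_exp_mul_mgf (μ := P) (X := ∑ i, Y i) k
    ht (hY_indep.integrable_exp_mul_sum hY_meas fun i _ => hY_int i)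
  rw [hY_indep.mgf_sum hY_meas, neg_neg] at hchernoff
  calc P.real {ω | #{i | X i ω ∈ A} ≤ k}
      ≤ exp (log 2 * k) * ∏ i, mgf (Y i) P (-log 2) := hcount ▸ hchernoff
    _ = 2 ^ k * ∏ i, (1 - P.real (X i ⁻¹' A) / 2) := by
      simp_rw [hY_mgf, ← rpow_def_of_pos two_pos, rpow_natCast]
    _ ≤ 2 ^ k * ∏ _i : ι, exp (-(p / 2)) := by
      refine mul_le_mul_of_nonneg_left (Finset.prod_le_prod (fun i _ => ?_) fun i _ => ?_)
        (by positivity)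
      · linarith [measureReal_le_one (μ := P) (s := X i ⁻¹' A)]
      · linarith [add_one_le_exp (-(p / 2)), hp i]
    _ = 2 ^ k * exp (-(Fintype.card ι * p / 2)) := by
      rw [Finset.prod_const, Finset.card_univ, ← exp_nat_mul]
      ring_nf

end Chernoff

section Homogeneous

variable {α : Type*} [PseudoMetricSpace α] [MeasurableSpace α]

def IsHomogeneousOnBall (μ : Measure α) (C d : ℝ) (x : α) (r : ℝ) : Prop :=
  ∀ θ ∈ Set.Ioo (0 : ℝ) 1, μ.real (ball x r) ≤ C * θ ^ (-d) * μ.real (ball x (θ * r))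

variable {μ : Measure α} {C d r : ℝ} {x : α}

lemma IsHomogeneousOnBall.rpow_mul_le (h : IsHomogeneousOnBall μ C d x r) {θ : ℝ}
    (hθ : θ ∈ Set.Ioo 0 1) : θ ^ d * μ.real (ball x r) ≤ C * μ.real (ball x (θ * r)) := by
  have hθd : 0 < θ ^ d := rpow_pos_of_pos hθ.1 d
  calc θ ^ d * μ.real (ball x r) ≤ θ ^ d * (C * θ ^ (-d) * μ.real (ball x (θ * r))) :=
        mul_le_mul_of_nonneg_left (h θ hθ) hθd.le
    _ = C * μ.real (ball x (θ * r)) := by rw [rpow_neg hθ.1.le]; field_simp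

lemma IsHomogeneousOnBall.rpow_mul_le_of_le_one [IsFiniteMeasure μ]
    (h : IsHomogeneousOnBall μ C d x r) (hC : 0 ≤ C) (hr : 0 ≤ r) {θ : ℝ}
    (hθ : θ ∈ Set.Ioc 0 1) : θ ^ d * μ.real (ball x r) ≤ C * μ.real (ball x (θ * r)) := by
  rcases hθ.2.lt_or_eq with hθ1 | rfl
  · exact h.rpow_mul_le ⟨hθ.1, hθ1⟩
  -- `θ = 1` is the limit `θ → 1⁻` of the case `θ < 1`.
  have hlim : Filter.Tendsto (fun θ : ℝ => θ ^ d * μ.real (ball x r)) (nhdsWithin 1 (Set.Iio 1))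
      (nhds (μ.real (ball x r))) := by
    simpa using ((continuousAt_rpow_const 1 d (Or.inl one_ne_zero)).tendsto.mul_const
      (μ.real (ball x r))).mono_left nhdsWithin_le_nhds
  rw [one_rpow, one_mul, one_mul]
  refine le_of_tendsto hlim ?_
  filter_upwards [Ioo_mem_nhdsLT zero_lt_one] with θ hθ
  exact (h.rpow_mul_le hθ).trans <| mul_le_mul_of_nonneg_left
    (measureReal_mono (ball_subset_ball (mul_le_of_le_one_left hr hθ.2.le))) hC

lemma IsHomogeneousOnBall.mul_le_measureReal_ball [IsFiniteMeasure μ]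
    (h : IsHomogeneousOnBall μ C d x r) (hC : 0 ≤ C) (hd : 0 < d) (hr : 0 ≤ r) {t : ℝ}
    (ht : t ∈ Set.Ioc 0 1) : t * μ.real (ball x r) ≤ C * μ.real (ball x (r * t ^ (1 / d))) := by
  have hθ : t ^ (1 / d) ∈ Set.Ioc 0 1 :=
    ⟨rpow_pos_of_pos ht.1 _, rpow_le_one ht.1.le ht.2 (by positivity)⟩
  have := h.rpow_mul_le_of_le_one hC hr hθ
  rwa [← rpow_mul ht.1.le, one_div_mul_cancel hd.ne', rpow_one, mul_comm _ r] at this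

end Homogeneous

lemma half_mul_exp_neg_natCast_div_two_le_half (k : ℕ) : 1 / 2 * exp (-(k : ℝ) / 2) ≤ 1 / 2 :=
  mul_le_of_le_one_right (by norm_num) (exp_le_one_iff.mpr (by linarith [k.cast_nonneg (α := ℝ)]))

lemma two_pow_mul_exp_neg_le {δ u : ℝ} {k : ℕ} (hδ : 0 < δ)
    (hδk : δ ≤ 1 / 2 * exp (-(k : ℝ) / 2)) (hu : 8 * log (2 / δ) ≤ u) :
    2 ^ k * exp (-(u / 2)) ≤ δ := by
  set L := log (2 / δ)
  have hexpL : exp (-L) = δ / 2 := by rw [exp_neg, exp_log (by positivity), inv_div]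
  have hkL : (k : ℝ) ≤ 2 * L := by
    have h : exp ((k : ℝ) / 2) ≤ 2 / δ := by
      rw [le_div_iff₀ hδ]
      calc exp ((k : ℝ) / 2) * δ ≤ exp ((k : ℝ) / 2) * (1 / 2 * exp (-(k : ℝ) / 2)) := by gcongr
        _ ≤ 2 := by rw [mul_left_comm, ← exp_add, neg_div, add_neg_cancel, exp_zero]; norm_num
    have := log_le_log (exp_pos _) h
    rw [log_exp] at this
    linarith
  have hδ_half : δ ≤ 1 / 2 := hδk.trans (half_mul_exp_neg_natCast_div_two_le_half k)
  calc 2 ^ k * exp (-(u / 2)) ≤ exp 1 ^ k * exp (-(4 * L)) := by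
        gcongr
        · linarith [add_one_le_exp 1]
        · linarith
    _ ≤ exp (-L) ^ 2 := by
        rw [exp_one_pow, sq, ← exp_add, ← exp_add, exp_le_exp]
        linarith
    _ ≤ δ := by rw [hexpL]; nlinarith

lemma mul_log_two_div_le {a m δ : ℝ} (ha : 0 < a) (h : 2 * exp (-(m / a)) ≤ δ) :
    a * log (2 / δ) ≤ m := by
  have hδ : 0 < δ := lt_of_lt_of_le (by positivity) h
  have : -(m / a) ≤ -log (2 / δ) := by
    rw [← exp_le_exp, exp_neg (log _), exp_log (by positivity), inv_div]
    linarith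
  rw [← le_div_iff₀' ha]
  linarith

theorem knn_shrinkage_high_probability_general {Ω : Type*} [MeasureSpace Ω]
    [IsProbabilityMeasure (volume : Measure Ω)] {D s k : ℕ}
    (μ : Measure (EuclideanSpace ℝ (Fin D))) [IsProbabilityMeasure μ]
    (x : EuclideanSpace ℝ (Fin D)) (C d r : ℝ) (hC : 0 < C) (hd : 0 < d) (hr : 0 < r)
    (hhom : ∀ θ : ℝ, θ ∈ Set.Ioo (0 : ℝ) 1 →
      (μ (Metric.ball x r)).toReal ≤ C * θ ^ (-d) * (μ (Metric.ball x (θ * r))).toReal)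
    (X : Fin s → Ω → EuclideanSpace ℝ (Fin D)) (hmeas : ∀ i, Measurable (X i))
    (hlaw : ∀ i, Measure.map (X i) (volume : Measure Ω) = μ)
    (hindep : ProbabilityTheory.iIndepFun X (volume : Measure Ω))
    (δ : ℝ)
    (hδlo : 2 * Real.exp (-((μ (Metric.ball x r)).toReal * s / (8 * C))) ≤ δ)
    (hδhi : δ ≤ (1 / 2) * Real.exp (-(k : ℝ) / 2)) :
    1 - δ ≤ ((volume : Measure Ω) {ω | ∃ I : Finset (Fin s), k ≤ I.card ∧
        ∀ i ∈ I, dist (X i ω) x ≤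
          r * (8 * C * Real.log (2 / δ) / ((μ (Metric.ball x r)).toReal * s)) ^ (1 / d)
        }).toReal := by
  classical
  set mass := (μ (ball x r)).toReal * s
  set L := log (2 / δ)
  have hδ_pos : 0 < δ := lt_of_lt_of_le (by positivity) hδlo
  have hδ_lt : δ < 2 := (hδhi.trans (half_mul_exp_neg_natCast_div_two_le_half k)).trans_lt
    (by norm_num)
  have hL_pos : 0 < L := log_pos ((one_lt_div hδ_pos).mpr hδ_lt)
  have h8L : 8 * C * L ≤ mass := mul_log_two_div_le (by positivity) hδlo
  have hmass_pos : 0 < mass := lt_of_lt_of_le (by positivity) h8L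
  set t := 8 * C * L / mass
  set ε := r * t ^ (1 / d)
  have hmass_ε : 8 * L ≤ s * μ.real (ball x ε) := by
    have hball := (show IsHomogeneousOnBall μ C d x r from hhom).mul_le_measureReal_ball
      hC.le hd hr.le ⟨by positivity, (div_le_one hmass_pos).mpr h8L⟩
    refine le_of_mul_le_mul_left ?_ hC
    calc C * (8 * L) = t * mass := by rw [div_mul_cancel₀ _ hmass_pos.ne']; ring
      _ = t * μ.real (ball x r) * s := (mul_assoc _ _ _).symm
      _ ≤ C * μ.real (ball x ε) * s := by gcongr
      _ = C * (s * μ.real (ball x ε)) := by ring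
  have htail : volume.real {ω | #{i | X i ω ∈ ball x ε} ≤ k} ≤ δ := by
    refine (measureReal_card_filter_le_le hmeas hindep measurableSet_ball
      (fun i => by rw [← map_measureReal_apply (hmeas i) measurableSet_ball, hlaw i]) k).trans ?_
    simpa using two_pow_mul_exp_neg_le hδ_pos hδhi hmass_ε
  set F := {ω | ∃ I : Finset (Fin s), k ≤ I.card ∧ ∀ i ∈ I, dist (X i ω) x ≤ ε}
  have hFc : Fᶜ ⊆ {ω | #{i | X i ω ∈ ball x ε} ≤ k} := fun ω hω => by
    by_contra hk
    exact hω ⟨({i | X i ω ∈ ball x ε} : Finset (Fin s)), (not_le.mp hk).le,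
      fun i hi => (mem_ball.mp (Finset.mem_filter.mp hi).2).le⟩
  calc 1 - δ ≤ 1 - volume.real Fᶜ := by linarith [measureReal_mono (μ := volume) hFc]
    _ ≤ volume.real F := one_sub_measureReal_compl_le F

/-- k-NN high-probability shrinkage: suppose `μ` is `(C,d)`-homogeneous
on `B(x,r)`, and `X₁,…,X_s` are i.i.d. `∼ μ`. For any `δ` with
`2 exp(−μ(B(x,r)) s/(8C)) ≤ δ ≤ (1/2) exp(−k/2)`, with probability at least `1−δ`
the distance from `x` to its `k`-th nearest sample is at most
`r·(8C log(2/δ)/(μ(B(x,r)) s))^{1/d}`; equivalently, at least `k` of the samples lie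
within that radius of `x`. -/
theorem knn_shrinkage_high_probability {Ω : Type*} [MeasureSpace Ω]
    [IsProbabilityMeasure (volume : Measure Ω)] {D s k : ℕ} (hk : 1 ≤ k) (hks : k ≤ s)
    (μ : Measure (EuclideanSpace ℝ (Fin D))) [IsProbabilityMeasure μ]
    (x : EuclideanSpace ℝ (Fin D)) (C d r : ℝ) (hC : 0 < C) (hd : 0 < d) (hr : 0 < r)
    (hhom : ∀ θ : ℝ, θ ∈ Set.Ioo (0 : ℝ) 1 →
      (μ (Metric.ball x r)).toReal ≤ C * θ ^ (-d) * (μ (Metric.ball x (θ * r))).toReal)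
    (X : Fin s → Ω → EuclideanSpace ℝ (Fin D)) (hmeas : ∀ i, Measurable (X i))
    (hlaw : ∀ i, Measure.map (X i) (volume : Measure Ω) = μ)
    (hindep : ProbabilityTheory.iIndepFun X (volume : Measure Ω))
    (δ : ℝ)
    (hδlo : 2 * Real.exp (-((μ (Metric.ball x r)).toReal * s / (8 * C))) ≤ δ)
    (hδhi : δ ≤ (1 / 2) * Real.exp (-(k : ℝ) / 2)) :
    1 - δ ≤ ((volume : Measure Ω) {ω | ∃ I : Finset (Fin s), k ≤ I.card ∧
        ∀ i ∈ I, dist (X i ω) x ≤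
          r * (8 * C * Real.log (2 / δ) / ((μ (Metric.ball x r)).toReal * s)) ^ (1 / d)
        }).toReal :=
  knn_shrinkage_high_probability_general μ x C d r hC hd hr hhom X hmeas hlaw hindep δ hδlo hδhi
end

section
/- Adaptive sub-sample crossing point: let ε: {k,…,n} → ℝ≥0 be nonincreasing and G: {k,…,n} → ℝ≥0 be strictly increasing with ε(n) ≤ G(n) and ε(k) > G(k). Then there exists a unique s* ∈ {k+1,…,n} such that ε(s*) ≤ G(s*) and ε(s*−1) > G(s*−1). Moreover, if H: {k,…,n} → ℝ≥0 satisfies |H(s) − ε(s)| ≤ G(s) for all s, and s₂ is the largest s with H(s) > 2G(s) (with s₁ = s₂+1), then (s*−1)/9 ≤ s₁ ≤ s*. -/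
/-- adaptive sub-sample crossing point: let `ε` be nonincreasing and `G`
strictly increasing (both nonnegative) on `{k,…,n}`, with `ε(n) ≤ G(n)` and
`ε(k) > G(k)`, and suppose (as for `G(s) = Δ√(2ps/n·log(2pn/δ))`) that
`G(s')/G(s) = √(s'/s)`. Then there is a unique `s* ∈ {k+1,…,n}` with `ε(s*) ≤ G(s*)`
and `ε(s*−1) > G(s*−1)`. Moreover, if `H` satisfies `|H(s) − ε(s)| ≤ G(s)` on
`{k,…,n}` and `s₂` is the largest `s` with `H(s) > 2G(s)`, then `s₁ = s₂ + 1`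
satisfies `(s*−1)/9 ≤ s₁ ≤ s*`. -/
theorem adaptive_crossing_point (k n : ℕ) (hk : 1 ≤ k) (hkn : k < n)
    (ε G H : ℕ → ℝ)
    (hεpos : ∀ s ∈ Finset.Icc k n, 0 ≤ ε s)
    (hGpos : ∀ s ∈ Finset.Icc k n, 0 ≤ G s)
    (hεanti : ∀ s ∈ Finset.Icc k n, ∀ s' ∈ Finset.Icc k n, s ≤ s' → ε s' ≤ ε s)
    (hGmono : ∀ s ∈ Finset.Icc k n, ∀ s' ∈ Finset.Icc k n, s < s' → G s < G s')
    (hGratio : ∀ s ∈ Finset.Icc k n, ∀ s' ∈ Finset.Icc k n,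
      G s' / G s = Real.sqrt ((s' : ℝ) / (s : ℝ)))
    (hend : ε n ≤ G n) (hstart : G k < ε k)
    (hH : ∀ s ∈ Finset.Icc k n, |H s - ε s| ≤ G s)
    (s₂ : ℕ) (hs₂mem : s₂ ∈ Finset.Icc k n) (hs₂ : 2 * G s₂ < H s₂)
    (hs₂max : ∀ s ∈ Finset.Icc k n, s₂ < s → H s ≤ 2 * G s) :
    (∃! sstar : ℕ, sstar ∈ Finset.Icc (k + 1) n ∧
        ε sstar ≤ G sstar ∧ G (sstar - 1) < ε (sstar - 1)) ∧
    ∀ sstar : ℕ, (sstar ∈ Finset.Icc (k + 1) n ∧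
        ε sstar ≤ G sstar ∧ G (sstar - 1) < ε (sstar - 1)) →
      ((sstar : ℝ) - 1) / 9 ≤ (s₂ + 1 : ℕ) ∧ s₂ + 1 ≤ sstar := by
  simp only [Finset.mem_Icc] at hs₂mem
  -- G is (weakly) monotone on Icc
  have hGmono' : ∀ s ∈ Finset.Icc k n, ∀ s' ∈ Finset.Icc k n, s ≤ s' → G s ≤ G s' := by
    intro s hs s' hs' hle
    rcases lt_or_eq_of_le hle with h | h
    · exact le_of_lt (hGmono s hs s' hs' h)
    · rw [h]
  -- least crossing point
  have hPn : k ≤ n ∧ n ≤ n ∧ ε n ≤ G n := ⟨le_of_lt hkn, le_rfl, hend⟩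
  classical
  set P : ℕ → Prop := fun s => k ≤ s ∧ s ≤ n ∧ ε s ≤ G s with hP
  have hex : ∃ s, P s := ⟨n, hPn⟩
  set m := Nat.find hex with hm
  obtain ⟨hmk, hmn, hmε⟩ : P m := Nat.find_spec hex
  have hmgt : k < m := by
    rcases lt_or_eq_of_le hmk with h | h
    · exact h
    · exfalso; rw [← h] at hmε; linarith
  have hm1mem : m - 1 ∈ Finset.Icc k n := by
    simp only [Finset.mem_Icc]; omega
  have hm1 : G (m - 1) < ε (m - 1) := by
    by_contra hcon
    push_neg at hcon
    have : ¬ P (m - 1) := Nat.find_min hex (by omega)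
    exact this ⟨by omega, by omega, hcon⟩
  -- any crossing point equals m : uniqueness helper
  have key : ∀ a b : ℕ, (a ∈ Finset.Icc (k+1) n ∧ ε a ≤ G a ∧ G (a-1) < ε (a-1)) →
      (b ∈ Finset.Icc (k+1) n ∧ ε b ≤ G b ∧ G (b-1) < ε (b-1)) → ¬ (a < b) := by
    intro a b ⟨hamem, haε, _⟩ ⟨hbmem, _, hbε⟩ hab
    simp only [Finset.mem_Icc] at hamem hbmem
    have hamem' : a ∈ Finset.Icc k n := by simp only [Finset.mem_Icc]; omega
    have hb1mem : b - 1 ∈ Finset.Icc k n := by simp only [Finset.mem_Icc]; omega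
    have h1 : ε (b-1) ≤ ε a := hεanti a hamem' (b-1) hb1mem (by omega)
    have h2 : G a ≤ G (b-1) := hGmono' a hamem' (b-1) hb1mem (by omega)
    linarith
  have hmmem : m ∈ Finset.Icc (k+1) n := by simp only [Finset.mem_Icc]; omega
  have hmprop : m ∈ Finset.Icc (k+1) n ∧ ε m ≤ G m ∧ G (m-1) < ε (m-1) := ⟨hmmem, hmε, hm1⟩
  refine ⟨⟨m, hmprop, ?_⟩, ?_⟩
  · intro b hb
    rcases lt_trichotomy b m with h | h | h
    · exact absurd h (key b m hb hmprop)
    · exact h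
    · exact absurd h (key m b hmprop hb)
  · intro sstar ⟨hsmem, hsε, hsε1⟩
    simp only [Finset.mem_Icc] at hsmem
    have hsmem' : sstar ∈ Finset.Icc k n := by simp only [Finset.mem_Icc]; omega
    have hs1mem : sstar - 1 ∈ Finset.Icc k n := by simp only [Finset.mem_Icc]; omega
    have hs₂mem' : s₂ ∈ Finset.Icc k n := by simp only [Finset.mem_Icc]; omega
    -- s₂ < sstar
    have hupper : s₂ < sstar := by
      by_contra hcon
      push_neg at hcon
      have h1 : ε s₂ ≤ ε sstar := hεanti sstar hsmem' s₂ hs₂mem' hcon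
      have h2 : G sstar ≤ G s₂ := hGmono' sstar hsmem' s₂ hs₂mem' hcon
      have h3 := hH s₂ hs₂mem'
      rw [abs_le] at h3
      linarith
    refine ⟨?_, by omega⟩
    -- lower bound
    by_cases hcase : sstar - 1 ≤ s₂ + 1
    · have hc : ((sstar : ℝ) - 1) ≤ ((s₂ : ℝ) + 1) := by
        have := Nat.cast_le (α := ℝ) |>.mpr hcase
        push_cast at this
        have h1 : (1:ℝ) ≤ sstar := by exact_mod_cast Nat.one_le_iff_ne_zero.mpr (by omega)
        rw [Nat.cast_sub (by omega)] at this
        push_cast at this ⊢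
        linarith
      have hnn : (0:ℝ) ≤ (sstar : ℝ) - 1 := by
        have : (1:ℝ) ≤ sstar := by exact_mod_cast (by omega : 1 ≤ sstar)
        linarith
      push_cast
      linarith
    · push_neg at hcase
      set s₁ := s₂ + 1 with hs₁def
      have hs₁mem : s₁ ∈ Finset.Icc k n := by simp only [Finset.mem_Icc]; omega
      have hH1 : H s₁ ≤ 2 * G s₁ := hs₂max s₁ hs₁mem (by omega)
      have habs := hH s₁ hs₁mem
      rw [abs_le] at habs
      have hε1 : ε s₁ ≤ 3 * G s₁ := by linarith
      have hεle : ε (sstar - 1) ≤ ε s₁ := hεanti s₁ hs₁mem (sstar - 1) hs1mem (by omega)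
      have hkmem : k ∈ Finset.Icc k n := by simp only [Finset.mem_Icc]; omega
      have hG1pos : 0 < G s₁ := lt_of_le_of_lt (hGpos k hkmem) (hGmono k hkmem s₁ hs₁mem (by omega))
      have hratio := hGratio s₁ hs₁mem (sstar - 1) hs1mem
      have hlt3 : G (sstar - 1) / G s₁ < 3 := by
        rw [div_lt_iff₀ hG1pos]
        linarith
      rw [hratio] at hlt3
      have hsqlt : ((sstar - 1 : ℕ) : ℝ) / ((s₁ : ℕ) : ℝ) < 9 := by
        have := (Real.sqrt_lt' (by norm_num : (0:ℝ) < 3)).mp hlt3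
        norm_num at this
        convert this using 2
      have hs₁pos : (0:ℝ) < (s₁ : ℝ) := by exact_mod_cast (by omega : 0 < s₁)
      rw [div_lt_iff₀ hs₁pos] at hsqlt
      have hcast : ((sstar - 1 : ℕ) : ℝ) = (sstar : ℝ) - 1 := by
        rw [Nat.cast_sub (by omega)]; norm_num
      rw [hcast] at hsqlt
      rw [div_le_iff₀ (by norm_num : (0:ℝ) < 9)]
      push_cast at hsqlt ⊢
      linarith
end
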